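/- arXiv:2105.01370 — 3 statements merged into one kernel-verified Lean document; each statement's English description precedes it below -/
import Mathlib

section
/- Let E : ℕ → ℝ have non-increasing first differences Δ_i := E(i+1) - E(i), and let i_max be a natural number. Define Δ_i and ζ_i := E(i) - i·Δ_i for i ∈ {0,...,i_max}. Then for every real t with 0 ≤ t ≤ i_max, the linear interpolation of E at t equals min over i ∈ {0,...,i_max} of (Δ_i·t + ζ_i). -/
open Finset

/-!
Consecutive chords differ by `(Δ_{i+1} - Δ_i) * (t - (i + 1))`, so by concavity the sequence
`i ↦ Δ_i * t + ζ_i` decreases while `i + 1 ≤ t` and increases once `t ≤ i + 1`. It is therefore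
minimal at `i = ⌊t⌋`, where the chord is the interpolation itself.
-/

noncomputable def interp (E : ℕ → ℝ) (t : ℝ) : ℝ :=
  (t - ⌊t⌋) * E (⌊t⌋.toNat + 1) + (1 - (t - ⌊t⌋)) * E ⌊t⌋.toNat

section Chord

variable {R : Type*} [CommRing R]

/-- The paper's chord extension `Δ_i * t + ζ_i`. -/
def chord (E : ℕ → R) (i : ℕ) (t : R) : R :=
  (E (i + 1) - E i) * t + (E i - i * (E (i + 1) - E i))

theorem chord_succ_sub_chord (E : ℕ → R) (i : ℕ) (t : R) :
    chord E (i + 1) t - chord E i t =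
      (E (i + 2) - E (i + 1) - (E (i + 1) - E i)) * (t - (i + 1)) := by
  simp only [chord]
  push_cast
  ring

variable [PartialOrder R] [IsOrderedRing R] {E : ℕ → R} {i : ℕ} {t : R}

theorem chord_succ_le_chord (hconc : E (i + 2) - E (i + 1) ≤ E (i + 1) - E i)
    (ht : (i : R) + 1 ≤ t) : chord E (i + 1) t ≤ chord E i t := by
  have := mul_nonpos_of_nonpos_of_nonneg (sub_nonpos.2 hconc) (sub_nonneg.2 ht)
  rw [← chord_succ_sub_chord] at this
  exact sub_nonpos.1 this

theorem chord_le_chord_succ (hconc : E (i + 2) - E (i + 1) ≤ E (i + 1) - E i)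
    (ht : t ≤ (i : R) + 1) : chord E i t ≤ chord E (i + 1) t := by
  have := mul_nonneg_of_nonpos_of_nonpos (sub_nonpos.2 hconc) (sub_nonpos.2 ht)
  rw [← chord_succ_sub_chord] at this
  exact sub_nonneg.1 this

theorem chord_le_chord (hconc : ∀ i : ℕ, E (i + 2) - E (i + 1) ≤ E (i + 1) - E i) {n : ℕ}
    (hnt : (n : R) ≤ t) (htn : t ≤ n + 1) (i : ℕ) : chord E n t ≤ chord E i t := by
  rcases le_total i n with hin | hni
  · induction hin using Nat.decreasingInduction with
    | self => exact le_rfl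
    | of_succ k hkn ih =>
      have hk : (k : R) + 1 ≤ t := le_trans (by simpa using Nat.mono_cast (α := R) hkn) hnt
      exact ih.trans (chord_succ_le_chord (hconc k) hk)
  · induction i, hni using Nat.le_induction with
    | base => exact le_rfl
    | succ k hnk ih =>
      have hk : t ≤ (k : R) + 1 := htn.trans (by gcongr)
      exact ih.trans (chord_le_chord_succ (hconc k) hk)

end Chord

theorem interp_eq_chord_floor (E : ℕ → ℝ) {t : ℝ} (ht : 0 ≤ t) :
    interp E t = chord E ⌊t⌋₊ t := by
  rw [interp, chord, Int.floor_toNat, ← natCast_floor_eq_intCast_floor ht]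
  ring

/-- Theorem 2: a discretely concave piecewise-linear interpolation equals the
pointwise minimum of its chord extensions `Δ_i·t + ζ_i`. -/
theorem interp_eq_min_chords
    (E : ℕ → ℝ)
    (hconc : ∀ i : ℕ, E (i + 2) - E (i + 1) ≤ E (i + 1) - E i)
    (imax : ℕ) (t : ℝ) (ht0 : 0 ≤ t) (ht1 : t ≤ imax) :
    interp E t =
      (Finset.range (imax + 1)).inf' (by simp)
        (fun i => (E (i + 1) - E i) * t + (E i - i * (E (i + 1) - E i))) := by
  have hmin : ∀ i, chord E ⌊t⌋₊ t ≤ chord E i t :=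
    chord_le_chord hconc (Nat.floor_le ht0) (Nat.lt_floor_add_one t).le
  have hfloor : ⌊t⌋₊ ∈ range (imax + 1) := mem_range.2 (Nat.lt_succ_of_le (Nat.floor_le_of_le ht1))
  rw [interp_eq_chord_floor E ht0]
  exact le_antisymm (le_inf' _ _ fun i _ => hmin i) (inf'_le (fun i => chord E i t) hfloor)
end

section
/- Strong duality for worst-case expectation over a Wasserstein ball on a finite space: for a probability distribution ĥ = (1/N)·Σ_{j=1}^N δ_{r̂_j} on {0,...,M} (an empirical distribution of N samples r̂_j), a function t : {0,...,M} → ℝ, and ρ ≥ 0, one has sup_{h : W(h, ĥ) ≤ ρ} E_{r∼h}[t_r] = inf_{λ ≥ 0} { λρ + (1/N)·Σ_{j=1}^N max_{r ∈ {0,...,M}} ( t_r − λ·|r − r̂_j| ) }. -/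
/-
Weak duality: for a coupling `γ` of `h` and `ĥ`, integrating
`t r₁ ≤ λ |r₁ - r₂| + max_r (t r - λ |r - r₂|)` against `γ` bounds `E_h[t]` by `λ W(h, ĥ)` plus the
dual sum. Strong duality: let each sample `j` be moved according to a distribution `q j`. The
(cost, value) pairs of these plans form a compact convex subset of the plane, every plan of cost
at most `ρ` yields a feasible `h`, and a line separating this set from the quadrant
`{cost ≤ ρ, value ≥ V + ε}` has slope `λ ≥ 0`. The maximum of `value - λ cost` over plans is
attained at Dirac plans, where it is exactly the sum of the penalized maxima.
-/

open Finset

/-- `h` is a probability mass function on `{0, …, M}`. -/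
def IsProb {M : ℕ} (h : Fin (M + 1) → ℝ) : Prop :=
  (∀ r, 0 ≤ h r) ∧ ∑ r, h r = 1

/-- `γ` is a coupling of `h₁` and `h₂` on `{0, …, M}²`. -/
def IsCoupling {M : ℕ} (γ : Fin (M + 1) → Fin (M + 1) → ℝ)
    (h₁ h₂ : Fin (M + 1) → ℝ) : Prop :=
  (∀ r₁ r₂, 0 ≤ γ r₁ r₂) ∧
  (∀ r₁, ∑ r₂, γ r₁ r₂ = h₁ r₁) ∧
  (∀ r₂, ∑ r₁, γ r₁ r₂ = h₂ r₂)

/-- The 1-Wasserstein distance on `{0, …, M}` with ground metric `|r - r'|`. -/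
noncomputable def Wdist {M : ℕ} (h₁ h₂ : Fin (M + 1) → ℝ) : ℝ :=
  sInf { c : ℝ | ∃ γ, IsCoupling γ h₁ h₂ ∧
    c = ∑ r₁, ∑ r₂, γ r₁ r₂ * |((r₁ : ℕ) : ℝ) - ((r₂ : ℕ) : ℝ)| }

/-- The empirical distribution of samples `rhat : Fin N → Fin (M+1)`. -/
noncomputable def empDist {M N : ℕ} (rhat : Fin N → Fin (M + 1)) :
    Fin (M + 1) → ℝ :=
  fun r => (∑ j, if rhat j = r then (1 : ℝ) else 0) / N

namespace WassersteinDuality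

variable {M N : ℕ}

section Lagrange

lemma strongDual_prod_apply (f : StrongDual ℝ (ℝ × ℝ)) (p : ℝ × ℝ) :
    f p = p.1 * f (1, 0) + p.2 * f (0, 1) := by
  conv_lhs => rw [← Prod.fst_add_snd p, ← mul_one p.1, ← mul_one p.2, ← smul_eq_mul p.1,
    ← smul_eq_mul p.2, ← Prod.smul_mk_zero, ← Prod.smul_zero_mk]
  rw [map_add, map_smul, map_smul, smul_eq_mul, smul_eq_mul]

lemma nonneg_of_forall_lt_add_mul {w c d : ℝ} (h : ∀ s : ℝ, 0 ≤ s → w < c + s * d) : 0 ≤ d := by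
  by_contra! hd
  have hs : 0 ≤ (c - w) / -d := div_nonneg (by linarith [h 0 le_rfl]) (by linarith)
  have := h _ hs
  rw [div_mul_eq_mul_div, div_neg, mul_div_cancel_right₀ _ hd.ne] at this
  linarith

theorem exists_lagrange_multiplier {P : Set (ℝ × ℝ)} (hPc : Convex ℝ P) (hPk : IsCompact P)
    {ρ V ε : ℝ} {p₀ : ℝ × ℝ} (hp₀ : p₀ ∈ P) (hp₀ρ : p₀.1 ≤ ρ)
    (hV : ∀ p ∈ P, p.1 ≤ ρ → p.2 ≤ V) (hε : 0 < ε) :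
    ∃ l, 0 ≤ l ∧ ∀ p ∈ P, l * ρ + (p.2 - l * p.1) < V + ε := by
  have hPQ : Disjoint P (Set.Iic ρ ×ˢ Set.Ici (V + ε)) :=
    Set.disjoint_left.2 fun p hp hq => by linarith [hV p hp hq.1, Set.mem_Ici.1 hq.2]
  obtain ⟨f, u, w, hfP, huw, hfQ⟩ := geometric_hahn_banach_compact_closed hPc hPk
    ((convex_Iic ρ).prod (convex_Ici _)) (isClosed_Iic.prod isClosed_Ici) hPQ
  set a := f (1, 0)
  set b := f (0, 1)
  have hQ : ∀ s t : ℝ, 0 ≤ s → 0 ≤ t → w < (ρ - s) * a + (V + ε + t) * b := fun s t hs ht => by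
    have := hfQ (ρ - s, V + ε + t) ⟨by simp [hs], by simp [ht]⟩
    rwa [strongDual_prod_apply f] at this
  have ha : 0 ≤ -a := nonneg_of_forall_lt_add_mul (w := w) (c := ρ * a + (V + ε) * b) fun s hs => by
    linarith [hQ s 0 hs le_rfl]
  have hb : 0 ≤ b := nonneg_of_forall_lt_add_mul (w := w) (c := ρ * a + (V + ε) * b) fun t ht => by
    linarith [hQ 0 t le_rfl ht]
  have hfP' : ∀ p ∈ P, p.1 * a + p.2 * b < ρ * a + (V + ε) * b := fun p hp => by
    linarith [strongDual_prod_apply f p, hfP p hp, hQ 0 0 le_rfl le_rfl]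
  -- A vertical separating line would put `p₀` on the side of the quadrant.
  have hbpos : 0 < b := by
    refine hb.lt_of_ne fun hb0 => ?_
    have := hfP' p₀ hp₀
    rw [← hb0] at this
    nlinarith [mul_le_mul_of_nonneg_left hp₀ρ ha]
  refine ⟨-a / b, div_nonneg ha hbpos.le, fun p hp => ?_⟩
  have key : V + ε - (-a / b * ρ + (p.2 - -a / b * p.1))
      = (ρ * a + (V + ε) * b - (p.1 * a + p.2 * b)) / b := by
    field_simp
    ring
  have := div_pos (sub_pos.2 (hfP' p hp)) hbpos
  linarith

lemma csSup_eq_csInf_of_forall_exists_lt {S D : Set ℝ} (hS : S.Nonempty) (hD : D.Nonempty)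
    (hSD : ∀ x ∈ S, ∀ y ∈ D, x ≤ y)
    (h : ∀ V, (∀ x ∈ S, x ≤ V) → ∀ ε > 0, ∃ y ∈ D, y < V + ε) : sSup S = sInf D := by
  have hSbdd : BddAbove S := hD.elim fun y hy => ⟨y, fun x hx => hSD x hx y hy⟩
  refine le_antisymm (csSup_le hS fun x hx => le_csInf hD (hSD x hx))
    (le_of_forall_pos_lt_add fun ε hε => ?_)
  obtain ⟨y, hy, hlt⟩ := h _ (fun x hx => le_csSup hSbdd hx) ε hε
  exact (csInf_le (hS.elim fun x hx => ⟨x, hSD x hx⟩) hy).trans_lt hlt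

end Lagrange

def groundDist (r₁ r₂ : Fin (M + 1)) : ℝ := |((r₁ : ℕ) : ℝ) - ((r₂ : ℕ) : ℝ)|

def transportCost (γ c : Fin (M + 1) → Fin (M + 1) → ℝ) : ℝ :=
  ∑ r₁, ∑ r₂, γ r₁ r₂ * c r₁ r₂

noncomputable def penalizedMax (t : Fin (M + 1) → ℝ) (c : Fin (M + 1) → Fin (M + 1) → ℝ)
    (l : ℝ) (r₀ : Fin (M + 1)) : ℝ :=
  univ.sup' univ_nonempty fun r => t r - l * c r r₀

section Coupling

variable {h₁ h₂ : Fin (M + 1) → ℝ} {γ : Fin (M + 1) → Fin (M + 1) → ℝ}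

lemma isCoupling_mul (H₁ : IsProb h₁) (H₂ : IsProb h₂) :
    IsCoupling (fun r₁ r₂ => h₁ r₁ * h₂ r₂) h₁ h₂ :=
  ⟨fun r₁ r₂ => mul_nonneg (H₁.1 r₁) (H₂.1 r₂),
    fun r₁ => by rw [← mul_sum, H₂.2, mul_one], fun r₂ => by rw [← sum_mul, H₁.2, one_mul]⟩

lemma sum_mul_eq_transportCost (hγ : IsCoupling γ h₁ h₂) (t : Fin (M + 1) → ℝ) :
    ∑ r, h₁ r * t r = transportCost γ fun r₁ _ => t r₁ := by
  simp only [transportCost, ← hγ.2.1, sum_mul]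

lemma transportCost_groundDist_nonneg (hγ : IsCoupling γ h₁ h₂) :
    0 ≤ transportCost γ groundDist :=
  sum_nonneg fun r₁ _ => sum_nonneg fun r₂ _ => mul_nonneg (hγ.1 r₁ r₂) (abs_nonneg _)

lemma Wdist_le_transportCost (hγ : IsCoupling γ h₁ h₂) :
    Wdist h₁ h₂ ≤ transportCost γ groundDist :=
  csInf_le ⟨0, by rintro _ ⟨γ', hγ', rfl⟩; exact transportCost_groundDist_nonneg hγ'⟩
    ⟨γ, hγ, rfl⟩

lemma le_mul_Wdist (H₁ : IsProb h₁) (H₂ : IsProb h₂) {a l : ℝ} (hl : 0 ≤ l)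
    (ha : ∀ γ, IsCoupling γ h₁ h₂ → a ≤ l * transportCost γ groundDist) :
    a ≤ l * Wdist h₁ h₂ := by
  rw [Wdist, ← smul_eq_mul, ← Real.sInf_smul_of_nonneg hl]
  refine le_csInf ⟨_, _, ⟨_, isCoupling_mul H₁ H₂, rfl⟩, rfl⟩ ?_
  rintro _ ⟨_, ⟨γ, hγ, rfl⟩, rfl⟩
  exact ha γ hγ

lemma sum_mul_le_transportCost_add (hγ : IsCoupling γ h₁ h₂) (t : Fin (M + 1) → ℝ)
    (c : Fin (M + 1) → Fin (M + 1) → ℝ) (l : ℝ) :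
    ∑ r, h₁ r * t r ≤ l * transportCost γ c + ∑ r, h₂ r * penalizedMax t c l r := by
  calc ∑ r, h₁ r * t r = ∑ r₁, ∑ r₂, γ r₁ r₂ * t r₁ := sum_mul_eq_transportCost hγ t
    _ ≤ ∑ r₁, ∑ r₂, γ r₁ r₂ * (l * c r₁ r₂ + penalizedMax t c l r₂) := by
      gcongr with r₁ _ r₂ _
      · exact hγ.1 r₁ r₂
      · have := le_sup' (fun r => t r - l * c r r₂) (mem_univ r₁)
        simp only [penalizedMax]
        linarith
    _ = l * transportCost γ c + ∑ r, h₂ r * penalizedMax t c l r := by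
      simp only [transportCost, mul_add, sum_add_distrib, mul_sum, ← hγ.2.2, sum_mul]
      rw [sum_comm (f := fun r₁ r₂ => γ r₁ r₂ * penalizedMax t c l r₂)]
      congr 1
      exact sum_congr rfl fun _ _ => sum_congr rfl fun _ _ => by ring

end Coupling

section Empirical

variable (rhat : Fin N → Fin (M + 1))

lemma sum_empDist_mul (F : Fin (M + 1) → ℝ) :
    ∑ r, empDist rhat r * F r = (1 / N) * ∑ j, F (rhat j) := by
  simp only [empDist, div_mul_eq_mul_div, sum_mul, ite_mul, one_mul, zero_mul, ← sum_div]
  rw [sum_comm]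
  simp only [sum_ite_eq, mem_univ, if_true]

lemma isProb_empDist (hN : 0 < N) : IsProb (empDist rhat) := by
  refine ⟨fun r => div_nonneg (sum_nonneg fun j _ => by positivity) N.cast_nonneg, ?_⟩
  simpa [hN.ne'] using sum_empDist_mul rhat 1

theorem sum_mul_le_of_Wdist_le (hN : 0 < N) {h t : Fin (M + 1) → ℝ} {ρ l : ℝ} (hh : IsProb h)
    (hW : Wdist h (empDist rhat) ≤ ρ) (hl : 0 ≤ l) :
    ∑ r, h r * t r ≤ l * ρ + (1 / N) * ∑ j, penalizedMax t groundDist l (rhat j) := by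
  have hgap : ∑ r, h r * t r - (1 / N) * ∑ j, penalizedMax t groundDist l (rhat j)
      ≤ l * Wdist h (empDist rhat) := by
    refine le_mul_Wdist hh (isProb_empDist rhat hN) hl fun γ hγ => ?_
    have := sum_mul_le_transportCost_add hγ t groundDist l
    rw [sum_empDist_mul] at this
    linarith
  linarith [mul_le_mul_of_nonneg_left hW hl]

end Empirical

section Plan

noncomputable def planMean (c : Fin N → Fin (M + 1) → ℝ) :
    (Fin N → Fin (M + 1) → ℝ) →ₗ[ℝ] ℝ where
  toFun q := (1 / N) * ∑ j, ∑ r, q j r * c j r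
  map_add' q q' := by simp only [Pi.add_apply, add_mul, sum_add_distrib, mul_add]
  map_smul' a q := by
    simp only [Pi.smul_apply, smul_eq_mul, mul_assoc, ← mul_sum, RingHom.id_apply]
    ring

lemma planMean_apply (c q : Fin N → Fin (M + 1) → ℝ) :
    planMean c q = (1 / N) * ∑ j, ∑ r, q j r * c j r := rfl

/-- A plan moves the mass `1 / N` of sample `j` according to the distribution `q j`. -/
def plans (N M : ℕ) : Set (Fin N → Fin (M + 1) → ℝ) :=
  Set.univ.pi fun _ => stdSimplex ℝ (Fin (M + 1))

lemma pi_single_mem_plans (s : Fin N → Fin (M + 1)) : (fun j => Pi.single (s j) 1) ∈ plans N M :=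
  fun j _ => single_mem_stdSimplex ℝ (s j)

lemma planMean_pi_single (c : Fin N → Fin (M + 1) → ℝ) (s : Fin N → Fin (M + 1)) :
    planMean c (fun j => Pi.single (s j) 1) = (1 / N) * ∑ j, c j (s j) := by
  simp [planMean_apply, Pi.single_apply]

noncomputable def planMarginal (q : Fin N → Fin (M + 1) → ℝ) (r : Fin (M + 1)) : ℝ :=
  (1 / N) * ∑ j, q j r

noncomputable def planCoupling (rhat : Fin N → Fin (M + 1)) (q : Fin N → Fin (M + 1) → ℝ)
    (r₁ r₂ : Fin (M + 1)) : ℝ :=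
  (1 / N) * ∑ j with rhat j = r₂, q j r₁

variable {rhat : Fin N → Fin (M + 1)} {q : Fin N → Fin (M + 1) → ℝ}

lemma nonneg_of_mem_plans (hq : q ∈ plans N M) (j : Fin N) (r : Fin (M + 1)) : 0 ≤ q j r :=
  (hq j (Set.mem_univ j)).1 r

lemma sum_eq_one_of_mem_plans (hq : q ∈ plans N M) (j : Fin N) : ∑ r, q j r = 1 :=
  (hq j (Set.mem_univ j)).2

lemma isProb_planMarginal (hN : 0 < N) (hq : q ∈ plans N M) : IsProb (planMarginal q) := by
  refine ⟨fun r => mul_nonneg (by positivity) (sum_nonneg fun j _ => nonneg_of_mem_plans hq j r),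
    ?_⟩
  simp only [planMarginal, ← mul_sum]
  rw [sum_comm]
  simp [sum_eq_one_of_mem_plans hq, hN.ne']

lemma isCoupling_planCoupling (hq : q ∈ plans N M) :
    IsCoupling (planCoupling rhat q) (planMarginal q) (empDist rhat) := by
  refine ⟨fun r₁ r₂ => mul_nonneg (by positivity)
    (sum_nonneg fun j _ => nonneg_of_mem_plans hq j r₁), fun r₁ => ?_, fun r₂ => ?_⟩
  · simp only [planCoupling, planMarginal, ← mul_sum, sum_fiberwise]
  · rw [empDist, sum_boole, ← one_div_mul_eq_div, cast_card]
    simp only [planCoupling, ← mul_sum]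
    rw [sum_comm]
    simp only [sum_eq_one_of_mem_plans hq]

lemma transportCost_planCoupling (c : Fin (M + 1) → Fin (M + 1) → ℝ) :
    transportCost (planCoupling rhat q) c = planMean (fun j r => c r (rhat j)) q := by
  simp only [transportCost, planCoupling, planMean_apply, mul_assoc, ← mul_sum, sum_mul]
  congr 1
  rw [sum_comm, ← sum_fiberwise univ rhat]
  refine sum_congr rfl fun r₂ _ => ?_
  rw [sum_comm]
  refine sum_congr rfl fun j hj => ?_
  rw [(mem_filter.1 hj).2]

lemma convex_plans : Convex ℝ (plans N M) :=
  convex_pi fun _ _ => convex_stdSimplex ℝ _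

lemma isCompact_plans : IsCompact (plans N M) :=
  isCompact_univ_pi fun _ => isCompact_stdSimplex ℝ _

lemma planMean_groundDist_pi_single_self (rhat : Fin N → Fin (M + 1)) :
    planMean (fun j r => groundDist r (rhat j)) (fun j => Pi.single (rhat j) 1) = 0 := by
  simp [planMean_pi_single, groundDist]

lemma exists_isProb_of_mem_plans (hN : 0 < N) (hq : q ∈ plans N M) (t : Fin (M + 1) → ℝ) :
    ∃ h, IsProb h ∧ Wdist h (empDist rhat) ≤ planMean (fun j r => groundDist r (rhat j)) q ∧
      ∑ r, h r * t r = planMean (fun _ r => t r) q := by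
  have hγ := isCoupling_planCoupling (rhat := rhat) hq
  refine ⟨planMarginal q, isProb_planMarginal hN hq, ?_, ?_⟩
  · exact (Wdist_le_transportCost hγ).trans_eq (transportCost_planCoupling _)
  · rw [sum_mul_eq_transportCost hγ, transportCost_planCoupling]

lemma exists_mem_plans_planMean_sub_eq (rhat : Fin N → Fin (M + 1)) (t : Fin (M + 1) → ℝ)
    (c : Fin (M + 1) → Fin (M + 1) → ℝ) (l : ℝ) :
    ∃ q ∈ plans N M, planMean (fun _ r => t r) q - l * planMean (fun j r => c r (rhat j)) q
      = (1 / N) * ∑ j, penalizedMax t c l (rhat j) := by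
  choose s _ hs using fun j =>
    exists_mem_eq_sup' univ_nonempty fun r => t r - l * c r (rhat j)
  refine ⟨_, pi_single_mem_plans s, ?_⟩
  rw [planMean_pi_single, planMean_pi_single, mul_left_comm, ← mul_sub, mul_sum, ← sum_sub_distrib]
  exact congrArg _ (sum_congr rfl fun j _ => (hs j).symm)

end Plan

end WassersteinDuality

/-- Strong duality for the worst-case expectation over a Wasserstein ball
centered at an empirical distribution on a finite space. -/
theorem wasserstein_sup_duality
    {M N : ℕ} (hN : 0 < N) (rhat : Fin N → Fin (M + 1))
    (t : Fin (M + 1) → ℝ) (ρ : ℝ) (hρ : 0 ≤ ρ) :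
    sSup { x : ℝ | ∃ h, IsProb h ∧ Wdist h (empDist rhat) ≤ ρ ∧
        x = ∑ r, h r * t r } =
      sInf { y : ℝ | ∃ l : ℝ, 0 ≤ l ∧
        y = l * ρ + (1 / N) * ∑ j, (Finset.univ.sup' Finset.univ_nonempty
          (fun r : Fin (M + 1) =>
            t r - l * |((r : ℕ) : ℝ) - ((rhat j : ℕ) : ℝ)|)) } := by
  open WassersteinDuality in
  have hq₀ := pi_single_mem_plans rhat
  have hcost₀ := planMean_groundDist_pi_single_self rhat
  obtain ⟨h₀, hh₀, hW₀, -⟩ := exists_isProb_of_mem_plans hN hq₀ t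
  refine csSup_eq_csInf_of_forall_exists_lt ⟨_, h₀, hh₀, hW₀.trans (hcost₀.trans_le hρ), rfl⟩
    ⟨_, 0, le_rfl, rfl⟩ ?_ fun V hV ε hε => ?_
  · rintro _ ⟨h, hh, hW, rfl⟩ _ ⟨l, hl, rfl⟩
    exact sum_mul_le_of_Wdist_le rhat hN hh hW hl
  let costValue := (planMean fun j r => groundDist r (rhat j)).prod (planMean fun _ r => t r)
  have hVplans : ∀ p ∈ costValue '' plans N M, p.1 ≤ ρ → p.2 ≤ V := by
    rintro _ ⟨q, hq, rfl⟩ hqρ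
    obtain ⟨h, hh, hW, he⟩ := exists_isProb_of_mem_plans hN hq t
    exact hV _ ⟨h, hh, hW.trans hqρ, he.symm⟩
  obtain ⟨l, hl, hlt⟩ := exists_lagrange_multiplier (convex_plans.linear_image costValue)
    (isCompact_plans.image costValue.continuous_of_finiteDimensional)
    (Set.mem_image_of_mem _ hq₀) (hcost₀.trans_le hρ) hVplans hε
  obtain ⟨q, hq, hqe⟩ := exists_mem_plans_planMean_sub_eq rhat t groundDist l
  exact ⟨_, ⟨l, hl, rfl⟩, hqe ▸ hlt _ (Set.mem_image_of_mem _ hq)⟩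
end

section
/- Strong duality for worst-case infimum over a Wasserstein ball on a finite space: with the notation above and u : {0,...,M} → ℝ, inf_{h : W(h, ĥ) ≤ ρ} E_{r∼h}[u(r)] = sup_{λ ≥ 0} { −λρ + (1/N)·Σ_{j=1}^N min_{r ∈ {0,...,M}} ( u(r) + λ·|r − r̂_j| ) }. -/
open Finset

-- auxiliary
noncomputable def dd {M : ℕ} (r r' : Fin (M + 1)) : ℝ :=
  |((r : ℕ) : ℝ) - ((r' : ℕ) : ℝ)|

lemma dd_nonneg {M : ℕ} (r r' : Fin (M + 1)) : 0 ≤ dd r r' := abs_nonneg _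

lemma dd_self {M : ℕ} (r : Fin (M + 1)) : dd r r = 0 := by simp [dd]

lemma dd_le {M : ℕ} (r r' : Fin (M + 1)) : dd r r' ≤ M := by
  have h1 : ((r : ℕ) : ℝ) ≤ M := by exact_mod_cast Nat.cast_le.mpr r.is_le
  have h2 : ((r' : ℕ) : ℝ) ≤ M := by exact_mod_cast Nat.cast_le.mpr r'.is_le
  have h3 : (0:ℝ) ≤ ((r : ℕ) : ℝ) := Nat.cast_nonneg _
  have h4 : (0:ℝ) ≤ ((r' : ℕ) : ℝ) := Nat.cast_nonneg _
  rw [dd, abs_le]; constructor <;> linarith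

lemma one_le_dd {M : ℕ} {r r' : Fin (M + 1)} (h : r ≠ r') : 1 ≤ dd r r' := by
  have hne : (r : ℕ) ≠ (r' : ℕ) := fun hc => h (Fin.ext hc)
  have : ((r : ℕ) : ℝ) - ((r' : ℕ) : ℝ) = (((r : ℕ) : ℤ) - ((r' : ℕ) : ℤ) : ℤ) := by
    push_cast; ring
  rw [dd, this]
  rw [← Int.cast_abs]
  have : (1 : ℤ) ≤ |((r : ℕ) : ℤ) - ((r' : ℕ) : ℤ)| := by
    apply Int.one_le_abs
    omega
  exact_mod_cast this

noncomputable def cmin {M N : ℕ} (rhat : Fin N → Fin (M + 1)) (u : Fin (M + 1) → ℝ)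
    (l : ℝ) (j : Fin N) : ℝ :=
  Finset.univ.inf' Finset.univ_nonempty (fun r => u r + l * dd r (rhat j))

noncomputable def gfun {M N : ℕ} (rhat : Fin N → Fin (M + 1)) (u : Fin (M + 1) → ℝ)
    (ρ : ℝ) (l : ℝ) : ℝ :=
  -(l * ρ) + (1 / N) * ∑ j, cmin rhat u l j

lemma sum_empDist_mul {M N : ℕ} (hN : 0 < N) (rhat : Fin N → Fin (M + 1))
    (c : Fin (M + 1) → ℝ) :
    ∑ r, empDist rhat r * c r = (1 / N) * ∑ j, c (rhat j) := by
  unfold empDist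
  have step : ∀ r : Fin (M+1),
      (∑ j, if rhat j = r then (1:ℝ) else 0) / N * c r
        = (1 / N) * ∑ j, (if rhat j = r then c r else 0) := by
    intro r
    rw [div_mul_eq_mul_div, Finset.sum_mul, Finset.sum_div, Finset.mul_sum]
    exact Finset.sum_congr rfl fun j _ => by split <;> ring
  simp_rw [step]
  rw [← Finset.mul_sum, Finset.sum_comm]
  congr 1
  refine Finset.sum_congr rfl fun j _ => ?_
  simp

lemma empDist_isProb {M N : ℕ} (hN : 0 < N) (rhat : Fin N → Fin (M + 1)) :
    IsProb (empDist rhat) := by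
  constructor
  · intro r
    unfold empDist
    apply div_nonneg _ (Nat.cast_nonneg _)
    apply Finset.sum_nonneg; intro j _; split <;> norm_num
  · have := sum_empDist_mul hN rhat (fun _ => (1:ℝ))
    simpa [Finset.sum_const, mul_comm, hN.ne',
      div_mul_cancel₀, one_div, inv_mul_cancel₀,
      (Nat.cast_ne_zero (R := ℝ)).mpr hN.ne'] using this

lemma prod_coupling {M : ℕ} {h₁ h₂ : Fin (M + 1) → ℝ}
    (hp₁ : IsProb h₁) (hp₂ : IsProb h₂) :
    IsCoupling (fun r r' => h₁ r * h₂ r') h₁ h₂ := by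
  refine ⟨fun r r' => mul_nonneg (hp₁.1 r) (hp₂.1 r'), fun r => ?_, fun r' => ?_⟩
  · rw [← Finset.mul_sum, hp₂.2, mul_one]
  · rw [← Finset.sum_mul, hp₁.2, one_mul]

lemma wdist_bddBelow {M : ℕ} (h₁ h₂ : Fin (M + 1) → ℝ) :
    BddBelow { c : ℝ | ∃ γ, IsCoupling γ h₁ h₂ ∧
      c = ∑ r₁, ∑ r₂, γ r₁ r₂ * |((r₁ : ℕ) : ℝ) - ((r₂ : ℕ) : ℝ)| } := by
  refine ⟨0, fun c hc => ?_⟩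
  obtain ⟨γ, hγ, rfl⟩ := hc
  apply Finset.sum_nonneg; intro r₁ _
  apply Finset.sum_nonneg; intro r₂ _
  exact mul_nonneg (hγ.1 r₁ r₂) (abs_nonneg _)

lemma wdist_le {M : ℕ} {h₁ h₂ : Fin (M + 1) → ℝ} {γ} {c : ℝ}
    (hγ : IsCoupling γ h₁ h₂)
    (hc : ∑ r₁, ∑ r₂, γ r₁ r₂ * |((r₁ : ℕ) : ℝ) - ((r₂ : ℕ) : ℝ)| ≤ c) :
    Wdist h₁ h₂ ≤ c :=
  le_trans (csInf_le (wdist_bddBelow h₁ h₂) ⟨γ, hγ, rfl⟩) hc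

lemma weak_duality {M N : ℕ} (hN : 0 < N) (rhat : Fin N → Fin (M + 1))
    (u : Fin (M + 1) → ℝ) {ρ : ℝ} {h : Fin (M + 1) → ℝ}
    (hp : IsProb h) (hw : Wdist h (empDist rhat) ≤ ρ) {l : ℝ} (hl : 0 ≤ l) :
    gfun rhat u ρ l ≤ ∑ r, h r * u r := by
  refine le_of_forall_pos_le_add fun ε hε => ?_
  set ε' : ℝ := ε / (l + 1) with hε'def
  have hε' : 0 < ε' := div_pos hε (by linarith)
  -- the coupling-cost set is nonempty
  have hne : { c : ℝ | ∃ γ, IsCoupling γ h (empDist rhat) ∧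
      c = ∑ r₁, ∑ r₂, γ r₁ r₂ * |((r₁ : ℕ) : ℝ) - ((r₂ : ℕ) : ℝ)| }.Nonempty :=
    ⟨_, ⟨_, prod_coupling hp (empDist_isProb hN rhat), rfl⟩⟩
  have hlt : Wdist h (empDist rhat) < ρ + ε' := lt_of_le_of_lt hw (by linarith)
  obtain ⟨c, ⟨γ, hγ, rfl⟩, hclt⟩ := exists_lt_of_csInf_lt hne hlt
  -- rewrite the objective through the coupling
  have hobj : ∑ r, h r * u r
      = (∑ r, ∑ r', γ r r' * (u r + l * dd r r'))
        - l * (∑ r, ∑ r', γ r r' * dd r r') := by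
    rw [Finset.mul_sum, ← Finset.sum_sub_distrib]
    refine Finset.sum_congr rfl fun r _ => ?_
    rw [← hγ.2.1 r, Finset.sum_mul, Finset.mul_sum, ← Finset.sum_sub_distrib]
    refine Finset.sum_congr rfl fun r' _ => ?_
    ring
  have hlow : ∑ r', empDist rhat r' *
        (Finset.univ.inf' Finset.univ_nonempty (fun r => u r + l * dd r r'))
      ≤ ∑ r, ∑ r', γ r r' * (u r + l * dd r r') := by
    rw [Finset.sum_comm]
    refine Finset.sum_le_sum fun r' _ => ?_
    rw [← hγ.2.2 r', Finset.sum_mul]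
    refine Finset.sum_le_sum fun r _ => ?_
    exact mul_le_mul_of_nonneg_left (Finset.inf'_le _ (Finset.mem_univ r)) (hγ.1 r r')
  have hemp : ∑ r', empDist rhat r' *
        (Finset.univ.inf' Finset.univ_nonempty (fun r => u r + l * dd r r'))
      = (1 / N) * ∑ j, cmin rhat u l j :=
    sum_empDist_mul hN rhat _
  have hcost : ∑ r, ∑ r', γ r r' * dd r r' < ρ + ε' := hclt
  have hcost' : l * (∑ r, ∑ r', γ r r' * dd r r') ≤ l * (ρ + ε') :=
    mul_le_mul_of_nonneg_left (le_of_lt hcost) hl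
  have hlε : l * ε' ≤ ε := by
    rw [hε'def, mul_div_assoc']
    rw [div_le_iff₀ (by linarith : (0:ℝ) < l + 1)]
    nlinarith
  have := hobj
  rw [gfun]
  linarith [hlow, hemp ▸ hlow]

lemma continuous_gfun {M N : ℕ} (rhat : Fin N → Fin (M + 1)) (u : Fin (M + 1) → ℝ)
    (ρ : ℝ) : Continuous (gfun rhat u ρ) := by
  unfold gfun
  apply Continuous.add
  · exact (continuous_id.mul continuous_const).neg
  · apply Continuous.mul continuous_const
    apply continuous_finset_sum
    intro j _
    unfold cmin
    apply continuous_iff_continuousAt.mpr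
    intro x
    exact ContinuousAt.finset_inf'_apply _ fun r _ =>
      (continuous_const.add (continuous_id.mul continuous_const)).continuousAt

lemma cmin_eq_of_large {M N : ℕ} (rhat : Fin N → Fin (M + 1)) (u : Fin (M + 1) → ℝ)
    {l Λ : ℝ} (hΛ : ∀ r r' : Fin (M + 1), u r' - u r ≤ Λ) (hΛ0 : 0 ≤ Λ)
    (hl : Λ ≤ l) (j : Fin N) : cmin rhat u l j = u (rhat j) := by
  apply le_antisymm
  · rw [cmin]
    calc Finset.univ.inf' Finset.univ_nonempty (fun r => u r + l * dd r (rhat j))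
        ≤ u (rhat j) + l * dd (rhat j) (rhat j) :=
          Finset.inf'_le _ (Finset.mem_univ (rhat j))
      _ = u (rhat j) := by simp [dd_self]
  · rw [cmin, Finset.le_inf'_iff]
    intro r _
    by_cases hr : r = rhat j
    · subst hr; simp [dd_self]
    · have h1 : 1 ≤ dd r (rhat j) := one_le_dd hr
      have h2 : l * 1 ≤ l * dd r (rhat j) :=
        mul_le_mul_of_nonneg_left h1 (le_trans hΛ0 hl)
      have h3 : u (rhat j) - u r ≤ Λ := hΛ r (rhat j)
      linarith

lemma exists_dual_max {M N : ℕ} (hN : 0 < N) (rhat : Fin N → Fin (M + 1))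
    (u : Fin (M + 1) → ℝ) {ρ : ℝ} (hρ : 0 ≤ ρ) :
    ∃ l₀, 0 ≤ l₀ ∧ ∀ l, 0 ≤ l → gfun rhat u ρ l ≤ gfun rhat u ρ l₀ := by
  set Λ : ℝ := max 0 ((Finset.univ.sup' Finset.univ_nonempty u) -
    (Finset.univ.inf' Finset.univ_nonempty u)) with hΛdef
  have hΛ0 : 0 ≤ Λ := le_max_left _ _
  have hΛ : ∀ r r' : Fin (M + 1), u r' - u r ≤ Λ := by
    intro r r'
    have h1 : u r' ≤ Finset.univ.sup' Finset.univ_nonempty u :=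
      Finset.le_sup' u (Finset.mem_univ r')
    have h2 : Finset.univ.inf' Finset.univ_nonempty u ≤ u r :=
      Finset.inf'_le u (Finset.mem_univ r)
    have := le_max_right (0:ℝ) ((Finset.univ.sup' Finset.univ_nonempty u) -
      (Finset.univ.inf' Finset.univ_nonempty u))
    linarith
  have htail : ∀ l, Λ ≤ l → gfun rhat u ρ l ≤ gfun rhat u ρ Λ := by
    intro l hl
    unfold gfun
    have e1 : ∀ j : Fin N, cmin rhat u l j = u (rhat j) :=
      cmin_eq_of_large rhat u hΛ hΛ0 hl
    have e2 : ∀ j : Fin N, cmin rhat u Λ j = u (rhat j) :=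
      cmin_eq_of_large rhat u hΛ hΛ0 le_rfl
    simp_rw [e1, e2]
    have : Λ * ρ ≤ l * ρ := mul_le_mul_of_nonneg_right hl hρ
    linarith
  obtain ⟨l₀, hl₀mem, hl₀max⟩ := isCompact_Icc.exists_isMaxOn
    (Set.nonempty_Icc.mpr hΛ0) ((continuous_gfun rhat u ρ).continuousOn
      (s := Set.Icc 0 Λ))
  refine ⟨l₀, hl₀mem.1, fun l hl => ?_⟩
  by_cases hcase : l ≤ Λ
  · exact hl₀max ⟨hl, hcase⟩
  · exact le_trans (htail l (le_of_lt (not_le.mp hcase)))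
      (hl₀max ⟨hΛ0, le_rfl⟩)

section PrimalAttain

variable {M N : ℕ}

set_option maxHeartbeats 2000000 in
lemma primal_attain (hN : 0 < N) (rhat : Fin N → Fin (M + 1))
    (u : Fin (M + 1) → ℝ) {ρ : ℝ} (hρ : 0 ≤ ρ) {l₀ : ℝ} (hl₀ : 0 ≤ l₀)
    (hmax : ∀ l, 0 ≤ l → gfun rhat u ρ l ≤ gfun rhat u ρ l₀) :
    ∃ h, IsProb h ∧ Wdist h (empDist rhat) ≤ ρ ∧
      ∑ r, h r * u r = gfun rhat u ρ l₀ := by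
  classical
  have hNR : (0:ℝ) < N := by exact_mod_cast hN
  -- the argmin sets
  have hgap0 : ∀ (j : Fin N) (r : Fin (M+1)),
      cmin rhat u l₀ j ≤ u r + l₀ * dd r (rhat j) :=
    fun j r => Finset.inf'_le _ (Finset.mem_univ r)
  set Rset : Fin N → Finset (Fin (M+1)) :=
    fun j => Finset.univ.filter (fun r => u r + l₀ * dd r (rhat j) = cmin rhat u l₀ j)
    with hRdef
  have hRne : ∀ j, (Rset j).Nonempty := by
    intro j
    obtain ⟨b, _, heq⟩ := Finset.exists_mem_eq_inf' (Finset.univ_nonempty)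
      (fun r => u r + l₀ * dd r (rhat j))
    exact ⟨b, Finset.mem_filter.mpr ⟨Finset.mem_univ b, heq.symm⟩⟩
  have hmemR : ∀ j r, r ∈ Rset j → u r + l₀ * dd r (rhat j) = cmin rhat u l₀ j :=
    fun j r hr => (Finset.mem_filter.mp hr).2
  have hnotR : ∀ j r, r ∉ Rset j → u r + l₀ * dd r (rhat j) ≠ cmin rhat u l₀ j :=
    fun j r hr hc' => hr (Finset.mem_filter.mpr ⟨Finset.mem_univ r, hc'⟩)
  choose rm hrmR hrmmin using
    fun j => Finset.exists_min_image (Rset j) (fun r => dd r (rhat j)) (hRne j)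
  choose rp hrpR hrpmax using
    fun j => Finset.exists_max_image (Rset j) (fun r => dd r (rhat j)) (hRne j)
  -- the minimal gap δ
  set badP : Finset (Fin N × Fin (M+1)) :=
    Finset.univ.filter (fun p => p.2 ∉ Rset p.1) with hbadPdef
  set δ : ℝ := if hP : badP.Nonempty then
      badP.inf' hP (fun p => u p.2 + l₀ * dd p.2 (rhat p.1) - cmin rhat u l₀ p.1)
    else 1 with hδdef
  have hδpos : 0 < δ := by
    rw [hδdef]
    split
    · next hP =>
      rw [Finset.lt_inf'_iff]
      intro p hp
      have h1 := hgap0 p.1 p.2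
      have h2 := hnotR p.1 p.2 ((Finset.mem_filter.mp hp).2)
      have h3 : cmin rhat u l₀ p.1 < u p.2 + l₀ * dd p.2 (rhat p.1) :=
        lt_of_le_of_ne h1 (Ne.symm h2)
      linarith
    · norm_num
  have hδle : ∀ j r, r ∉ Rset j →
      δ ≤ u r + l₀ * dd r (rhat j) - cmin rhat u l₀ j := by
    intro j r hr
    have hmem : (j, r) ∈ badP := Finset.mem_filter.mpr ⟨Finset.mem_univ _, hr⟩
    rw [hδdef, dif_pos ⟨(j,r), hmem⟩]
    exact Finset.inf'_le _ hmem
  have hMr : (0:ℝ) < (M:ℝ) + 1 := by positivity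
  have hddM : ∀ r r' : Fin (M+1), dd r r' ≤ (M:ℝ) + 1 :=
    fun r r' => le_trans (dd_le r r') (by linarith)
  -- Claim (i): (1/N) * ∑ dd (rm j) ≤ ρ
  have claim1 : (1/N : ℝ) * ∑ j, dd (rm j) (rhat j) ≤ ρ := by
    by_contra hA'
    push_neg at hA'
    set ε : ℝ := δ / ((M:ℝ) + 1) with hεdef
    have hε : 0 < ε := div_pos hδpos hMr
    have hkey : ∀ j, cmin rhat u l₀ j + ε * dd (rm j) (rhat j)
        ≤ cmin rhat u (l₀ + ε) j := by
      intro j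
      apply Finset.le_inf'
      intro r _
      by_cases hr : r ∈ Rset j
      · have h1 := hmemR j r hr
        have h2 : dd (rm j) (rhat j) ≤ dd r (rhat j) := hrmmin j r hr
        have h3 : ε * dd (rm j) (rhat j) ≤ ε * dd r (rhat j) :=
          mul_le_mul_of_nonneg_left h2 hε.le
        have hexp : u r + (l₀ + ε) * dd r (rhat j)
            = cmin rhat u l₀ j + ε * dd r (rhat j) := by
          rw [add_mul]; linarith
        linarith
      · have h1 := hδle j r hr
        have h2 : ε * dd (rm j) (rhat j) ≤ δ := by
          calc ε * dd (rm j) (rhat j) ≤ ε * ((M:ℝ) + 1) :=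
                mul_le_mul_of_nonneg_left (hddM _ _) hε.le
            _ = δ := by rw [hεdef]; field_simp
        have h3 : 0 ≤ ε * dd r (rhat j) := mul_nonneg hε.le (dd_nonneg _ _)
        have hexp : u r + (l₀ + ε) * dd r (rhat j)
            = (u r + l₀ * dd r (rhat j)) + ε * dd r (rhat j) := by ring
        linarith
    have hsum : (1/N : ℝ) * ∑ j, (cmin rhat u l₀ j + ε * dd (rm j) (rhat j))
        ≤ (1/N : ℝ) * ∑ j, cmin rhat u (l₀ + ε) j :=
      mul_le_mul_of_nonneg_left (Finset.sum_le_sum fun j _ => hkey j) (by positivity)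
    have hexpand : (1/N : ℝ) * ∑ j, (cmin rhat u l₀ j + ε * dd (rm j) (rhat j))
        = (1/N : ℝ) * (∑ j, cmin rhat u l₀ j)
          + ε * ((1/N : ℝ) * ∑ j, dd (rm j) (rhat j)) := by
      rw [Finset.sum_add_distrib, ← Finset.mul_sum]
      ring
    have hg := hmax (l₀ + ε) (by positivity)
    rw [gfun, gfun] at hg
    nlinarith [mul_pos hε (sub_pos.mpr hA')]
  -- Claim (ii): if 0 < l₀ then ρ ≤ (1/N) * ∑ dd (rp j)
  have claim2 : 0 < l₀ → ρ ≤ (1/N : ℝ) * ∑ j, dd (rp j) (rhat j) := by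
    intro hlpos
    by_contra hB'
    push_neg at hB'
    set ε : ℝ := min l₀ (δ / ((M:ℝ) + 1)) with hεdef
    have hε : 0 < ε := lt_min hlpos (div_pos hδpos hMr)
    have hεl : ε ≤ l₀ := min_le_left _ _
    have hεδ : ε ≤ δ / ((M:ℝ) + 1) := min_le_right _ _
    have hkey : ∀ j, cmin rhat u l₀ j - ε * dd (rp j) (rhat j)
        ≤ cmin rhat u (l₀ - ε) j := by
      intro j
      apply Finset.le_inf'
      intro r _
      by_cases hr : r ∈ Rset j
      · have h1 := hmemR j r hr
        have h2 : dd r (rhat j) ≤ dd (rp j) (rhat j) := hrpmax j r hr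
        have h3 : ε * dd r (rhat j) ≤ ε * dd (rp j) (rhat j) :=
          mul_le_mul_of_nonneg_left h2 hε.le
        have hexp : u r + (l₀ - ε) * dd r (rhat j)
            = cmin rhat u l₀ j - ε * dd r (rhat j) := by
          rw [sub_mul]; linarith
        linarith
      · have h1 := hδle j r hr
        have h2 : ε * dd r (rhat j) ≤ δ := by
          calc ε * dd r (rhat j) ≤ (δ / ((M:ℝ) + 1)) * ((M:ℝ) + 1) := by
                apply mul_le_mul hεδ (hddM _ _) (dd_nonneg _ _)
                positivity
            _ = δ := by field_simp
        have h3 : 0 ≤ ε * dd (rp j) (rhat j) := mul_nonneg hε.le (dd_nonneg _ _)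
        have hexp : u r + (l₀ - ε) * dd r (rhat j)
            = (u r + l₀ * dd r (rhat j)) - ε * dd r (rhat j) := by ring
        linarith
    have hsum : (1/N : ℝ) * ∑ j, (cmin rhat u l₀ j - ε * dd (rp j) (rhat j))
        ≤ (1/N : ℝ) * ∑ j, cmin rhat u (l₀ - ε) j :=
      mul_le_mul_of_nonneg_left (Finset.sum_le_sum fun j _ => hkey j) (by positivity)
    have hexpand : (1/N : ℝ) * ∑ j, (cmin rhat u l₀ j - ε * dd (rp j) (rhat j))
        = (1/N : ℝ) * (∑ j, cmin rhat u l₀ j)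
          - ε * ((1/N : ℝ) * ∑ j, dd (rp j) (rhat j)) := by
      rw [Finset.sum_sub_distrib, ← Finset.mul_sum]
      ring
    have hg := hmax (l₀ - ε) (by linarith)
    rw [gfun, gfun] at hg
    nlinarith [mul_pos hε (sub_pos.mpr hB')]
  -- abbreviations
  set SA : ℝ := (1/N:ℝ) * ∑ j, dd (rm j) (rhat j) with hSAdef
  set SB : ℝ := (1/N:ℝ) * ∑ j, dd (rp j) (rhat j) with hSBdef
  have hABle : SA ≤ SB :=
    mul_le_mul_of_nonneg_left
      (Finset.sum_le_sum fun j _ => hrmmin j (rp j) (hrpR j)) (by positivity)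
  -- choose the mixing weight θ
  obtain ⟨θ, hθ0, hθ1, hbud, hslack⟩ :
      ∃ θ : ℝ, 0 ≤ θ ∧ θ ≤ 1 ∧ (1-θ) * SA + θ * SB ≤ ρ ∧
        l₀ * ((1-θ) * SA + θ * SB) = l₀ * ρ := by
    by_cases hl0 : l₀ = 0
    · exact ⟨0, le_rfl, zero_le_one, by linarith [claim1], by rw [hl0]; ring⟩
    · have hlpos : 0 < l₀ := lt_of_le_of_ne hl₀ (Ne.symm hl0)
      have hρB := claim2 hlpos
      by_cases hAB : SA = SB
      · have hAρ : SA = ρ := le_antisymm claim1 (by rw [hAB]; exact hρB)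
        exact ⟨0, le_rfl, zero_le_one, by linarith,
          by linear_combination l₀ * hAρ⟩
      · have hABlt : SA < SB := lt_of_le_of_ne hABle hAB
        have hne : SB - SA ≠ 0 := ne_of_gt (by linarith)
        have heq : (1 - (ρ - SA)/(SB - SA)) * SA + ((ρ - SA)/(SB - SA)) * SB = ρ := by
          field_simp
          ring
        refine ⟨(ρ - SA)/(SB - SA), div_nonneg (by linarith) (by linarith), ?_,
          le_of_eq heq, by rw [heq]⟩
        rw [div_le_one (by linarith)]
        linarith
  -- the primal optimizer
  set q : Fin N → Fin (M+1) → ℝ :=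
    fun j r => (1-θ) * (if r = rm j then 1 else 0) + θ * (if r = rp j then 1 else 0)
    with hqdef
  have hq0 : ∀ j r, 0 ≤ q j r := by
    intro j r
    have i1 : (0:ℝ) ≤ if r = rm j then (1:ℝ) else 0 := by split <;> norm_num
    have i2 : (0:ℝ) ≤ if r = rp j then (1:ℝ) else 0 := by split <;> norm_num
    exact add_nonneg (mul_nonneg (by linarith) i1) (mul_nonneg hθ0 i2)
  have hbase : ∀ (b : Fin (M+1)) (f : Fin (M+1) → ℝ),
      ∑ r, (if r = b then (1:ℝ) else 0) * f r = f b := by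
    intro b f
    simp only [ite_mul, one_mul, zero_mul]
    exact (Finset.sum_ite_eq' Finset.univ b f).trans (if_pos (Finset.mem_univ b))
  have hqsum : ∀ (j : Fin N) (f : Fin (M+1) → ℝ),
      ∑ r, q j r * f r = (1-θ) * f (rm j) + θ * f (rp j) := by
    intro j f
    have e : ∀ r, q j r * f r
        = (1-θ) * ((if r = rm j then (1:ℝ) else 0) * f r)
          + θ * ((if r = rp j then (1:ℝ) else 0) * f r) := by
      intro r; simp only [hqdef]; ring
    simp_rw [e]
    rw [Finset.sum_add_distrib, ← Finset.mul_sum, ← Finset.mul_sum, hbase, hbase]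
  have hqsum1 : ∀ j, ∑ r, q j r = 1 := by
    intro j
    calc ∑ r, q j r = ∑ r, q j r * 1 := by simp
      _ = (1-θ) * 1 + θ * 1 := hqsum j (fun _ => 1)
      _ = 1 := by ring
  set h : Fin (M+1) → ℝ := fun r => (1/N:ℝ) * ∑ j, q j r with hhdef
  set γ : Fin (M+1) → Fin (M+1) → ℝ :=
    fun r r' => (1/N:ℝ) * ∑ j, if rhat j = r' then q j r else 0 with hγdef
  have hNne : (N:ℝ) ≠ 0 := by exact_mod_cast hN.ne'
  have hprob : IsProb h := by
    constructor
    · intro r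
      exact mul_nonneg (by positivity) (Finset.sum_nonneg fun j _ => hq0 j r)
    · simp only [hhdef]
      rw [← Finset.mul_sum, Finset.sum_comm]
      simp only [hqsum1]
      rw [Finset.sum_const, Finset.card_univ, Fintype.card_fin, nsmul_eq_mul,
        mul_one, one_div, inv_mul_cancel₀ hNne]
  have hcoup : IsCoupling γ h (empDist rhat) := by
    refine ⟨?_, ?_, ?_⟩
    · intro r r'
      apply mul_nonneg (by positivity)
      apply Finset.sum_nonneg
      intro j _
      split
      exacts [hq0 j r, le_rfl]
    · intro r
      simp only [hγdef, hhdef]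
      rw [← Finset.mul_sum, Finset.sum_comm]
      congr 1
      refine Finset.sum_congr rfl fun j _ => ?_
      exact (Finset.sum_ite_eq Finset.univ (rhat j) (fun _ => q j r)).trans
        (if_pos (Finset.mem_univ _))
    · intro r'
      simp only [hγdef]
      rw [← Finset.mul_sum, Finset.sum_comm]
      have e : ∀ j : Fin N, ∑ r, (if rhat j = r' then q j r else 0)
          = (if rhat j = r' then (1:ℝ) else 0) := by
        intro j
        split
        · exact hqsum1 j
        · exact Finset.sum_const_zero
      rw [Finset.sum_congr rfl fun j _ => e j]
      unfold empDist
      rw [one_div, inv_mul_eq_div]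
  have hcost : ∑ r₁, ∑ r₂, γ r₁ r₂ * |((r₁:ℕ):ℝ) - ((r₂:ℕ):ℝ)|
      = (1-θ) * SA + θ * SB := by
    have e1 : ∀ r r' : Fin (M+1), γ r r' * |((r:ℕ):ℝ) - ((r':ℕ):ℝ)|
        = (1/N:ℝ) * ∑ j, (if rhat j = r' then q j r * dd r r' else 0) := by
      intro r r'
      simp only [hγdef]
      rw [mul_assoc, Finset.sum_mul]
      congr 1
      refine Finset.sum_congr rfl fun j _ => ?_
      rw [ite_mul, zero_mul]
      rfl
    calc ∑ r₁, ∑ r₂, γ r₁ r₂ * |((r₁:ℕ):ℝ) - ((r₂:ℕ):ℝ)|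
        = ∑ r, (1/N:ℝ) * ∑ j, ∑ r', (if rhat j = r' then q j r * dd r r' else 0) := by
          refine Finset.sum_congr rfl fun r _ => ?_
          simp_rw [e1]
          rw [← Finset.mul_sum, Finset.sum_comm]
      _ = ∑ r, (1/N:ℝ) * ∑ j, q j r * dd r (rhat j) := by
          refine Finset.sum_congr rfl fun r _ => ?_
          congr 1
          refine Finset.sum_congr rfl fun j _ => ?_
          exact (Finset.sum_ite_eq Finset.univ (rhat j)
            (fun r' => q j r * dd r r')).trans (if_pos (Finset.mem_univ _))
      _ = (1/N:ℝ) * ∑ j, ∑ r, q j r * dd r (rhat j) := by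
          rw [← Finset.mul_sum, Finset.sum_comm]
      _ = (1/N:ℝ) * ∑ j, ((1-θ) * dd (rm j) (rhat j) + θ * dd (rp j) (rhat j)) := by
          congr 1
          exact Finset.sum_congr rfl fun j _ => hqsum j _
      _ = (1-θ) * SA + θ * SB := by
          rw [Finset.sum_add_distrib, ← Finset.mul_sum, ← Finset.mul_sum,
            hSAdef, hSBdef]
          ring
  refine ⟨h, hprob, ?_, ?_⟩
  · exact wdist_le hcoup (by rw [hcost]; exact hbud)
  · calc ∑ r, h r * u r
        = (1/N:ℝ) * ∑ j, ∑ r, q j r * u r := by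
          simp only [hhdef]
          have e : ∀ r, ((1/N:ℝ) * ∑ j, q j r) * u r
              = (1/N:ℝ) * ∑ j, q j r * u r := by
            intro r; rw [mul_assoc, Finset.sum_mul]
          simp_rw [e]
          rw [← Finset.mul_sum, Finset.sum_comm]
      _ = (1/N:ℝ) * ∑ j, ((1-θ) * u (rm j) + θ * u (rp j)) := by
          congr 1
          exact Finset.sum_congr rfl fun j _ => hqsum j u
      _ = gfun rhat u ρ l₀ := by
          have em : ∀ j, u (rm j) = cmin rhat u l₀ j - l₀ * dd (rm j) (rhat j) :=
            fun j => by have := hmemR j (rm j) (hrmR j); linarith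
          have ep : ∀ j, u (rp j) = cmin rhat u l₀ j - l₀ * dd (rp j) (rhat j) :=
            fun j => by have := hmemR j (rp j) (hrpR j); linarith
          have expand : ∀ j : Fin N,
              (1-θ) * (cmin rhat u l₀ j - l₀ * dd (rm j) (rhat j))
                + θ * (cmin rhat u l₀ j - l₀ * dd (rp j) (rhat j))
              = cmin rhat u l₀ j - (l₀*(1-θ)) * dd (rm j) (rhat j)
                - (l₀*θ) * dd (rp j) (rhat j) := fun j => by ring
          simp_rw [em, ep, expand]
          rw [Finset.sum_sub_distrib, Finset.sum_sub_distrib, ← Finset.mul_sum,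
            ← Finset.mul_sum, gfun]
          rw [hSAdef, hSBdef] at hslack
          linear_combination (-1 : ℝ) * hslack

end PrimalAttain

/-- Strong duality for the worst-case infimum over a Wasserstein ball
centered at an empirical distribution on a finite space. -/
theorem wasserstein_inf_duality
    {M N : ℕ} (hN : 0 < N) (rhat : Fin N → Fin (M + 1))
    (u : Fin (M + 1) → ℝ) (ρ : ℝ) (hρ : 0 ≤ ρ) :
    sInf { x : ℝ | ∃ h, IsProb h ∧ Wdist h (empDist rhat) ≤ ρ ∧
        x = ∑ r, h r * u r } =
      sSup { y : ℝ | ∃ l : ℝ, 0 ≤ l ∧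
        y = -(l * ρ) + (1 / N) * ∑ j, (Finset.univ.inf' Finset.univ_nonempty
          (fun r : Fin (M + 1) =>
            u r + l * |((r : ℕ) : ℝ) - ((rhat j : ℕ) : ℝ)|)) } := by
  obtain ⟨l₀, hl₀, hmax⟩ := exists_dual_max hN rhat u hρ
  obtain ⟨h₀, hp₀, hw₀, hv₀⟩ := primal_attain hN rhat u hρ hl₀ hmax
  have hSlb : ∀ x ∈ { x : ℝ | ∃ h, IsProb h ∧ Wdist h (empDist rhat) ≤ ρ ∧
      x = ∑ r, h r * u r }, gfun rhat u ρ l₀ ≤ x := by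
    rintro x ⟨h, hp, hw, rfl⟩
    exact weak_duality hN rhat u hp hw hl₀
  have hSmem : gfun rhat u ρ l₀ ∈ { x : ℝ | ∃ h, IsProb h ∧
      Wdist h (empDist rhat) ≤ ρ ∧ x = ∑ r, h r * u r } :=
    ⟨h₀, hp₀, hw₀, hv₀.symm⟩
  have hTub : ∀ y ∈ { y : ℝ | ∃ l : ℝ, 0 ≤ l ∧
      y = -(l * ρ) + (1 / N) * ∑ j, (Finset.univ.inf' Finset.univ_nonempty
        (fun r : Fin (M + 1) =>
          u r + l * |((r : ℕ) : ℝ) - ((rhat j : ℕ) : ℝ)|)) },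
      y ≤ gfun rhat u ρ l₀ := by
    rintro y ⟨l, hl, rfl⟩
    exact hmax l hl
  have hTmem : gfun rhat u ρ l₀ ∈ { y : ℝ | ∃ l : ℝ, 0 ≤ l ∧
      y = -(l * ρ) + (1 / N) * ∑ j, (Finset.univ.inf' Finset.univ_nonempty
        (fun r : Fin (M + 1) =>
          u r + l * |((r : ℕ) : ℝ) - ((rhat j : ℕ) : ℝ)|)) } :=
    ⟨l₀, hl₀, rfl⟩
  apply le_antisymm
  · exact le_trans (csInf_le ⟨_, hSlb⟩ hSmem) (le_csSup ⟨_, hTub⟩ hTmem)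
  · exact le_trans (csSup_le ⟨_, hTmem⟩ hTub) (le_csInf ⟨_, hSmem⟩ hSlb)
end
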